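/- Let (f,g) ∈ 𝒞₄(I) and suppose there exist a, b, c ∈ ℝ such that a(f')² + bf'g' + c(g')² = (W^{2,1}_{f,g})^{2/3} on I. Then the function (3W^{4,1}_{f,g} + 12W^{3,2}_{f,g})/(W^{2,1}_{f,g})^{5/3} − 5(W^{3,1}_{f,g})²/(W^{2,1}_{f,g})^{8/3} is constant on I, equal to −(9/4)(b² − 4ac). -/

import Mathlib

/-- The real cube root of a real number. -/
noncomputable def cbrt (x : ℝ) : ℝ :=
  if 0 ≤ x then x ^ ((1 : ℝ) / 3) else -((-x) ^ ((1 : ℝ) / 3))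

/-- The generalized Wronski-type determinant `W^{i,j}_{f,g}`. -/
noncomputable def Wdet (f g : ℝ → ℝ) (i j : ℕ) (x : ℝ) : ℝ :=
  iteratedDeriv i f x * iteratedDeriv j g x - iteratedDeriv j f x * iteratedDeriv i g x

/-! With `h := a f'² + b f'g' + c g'²`, `W := W^{2,1}` and `u := ∛W`, the relation reads `h = u²`,
so `W² = h³` on `I`. Differentiating twice gives `2 W W' = 3 h² h'` and
`2 W'² + 2 W W'' = 6 h h'² + 3 h² h''`, where `W' = W^{3,1}`, `W'' = W^{4,1} + W^{3,2}`, and `h, h', h''`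
are values of the polar form `B` of `a X² + b X Y + c Y²` at `vₖ = (f⁽ᵏ⁾, g⁽ᵏ⁾)`. The Lagrange identity
`B(v₁,v₁) B(v₂,v₂) - B(v₁,v₂)² = -(b² - 4ac) W² / 4` and the Cramer relation
`W B(v₁,v₃) + W^{3,2} B(v₁,v₁) = W^{3,1} B(v₁,v₂)` then eliminate everything but `b² - 4ac`.
Division by `u` is legitimate since `(f'/g')' = W / g'²` does not vanish. -/

open Set

lemma cbrt_pow_three (x : ℝ) : cbrt x ^ 3 = x := by
  have key : ∀ y : ℝ, 0 ≤ y → (y ^ ((1 : ℝ) / 3)) ^ 3 = y := fun y hy => by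
    rw [← Real.rpow_natCast, ← Real.rpow_mul hy]; norm_num
  unfold cbrt
  split_ifs with hx
  · exact key x hx
  · rw [neg_pow, key (-x) (by linarith)]; ring

/-- `B(vᵢ, vⱼ)` in the notation above. -/
noncomputable def quadBilin (a b c : ℝ) (f g : ℝ → ℝ) (i j : ℕ) (x : ℝ) : ℝ :=
  a * (iteratedDeriv i f x * iteratedDeriv j f x)
    + b / 2 * (iteratedDeriv i f x * iteratedDeriv j g x + iteratedDeriv j f x * iteratedDeriv i g x)
    + c * (iteratedDeriv i g x * iteratedDeriv j g x)

section

variable {f g : ℝ → ℝ} {s : Set ℝ} {x : ℝ}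

lemma contDiffOn_iteratedDeriv_of_isOpen {n k : ℕ} (hf : ContDiffOn ℝ n f s) (hs : IsOpen s)
    (hk : k ≤ n) : ContDiffOn ℝ (n - k : ℕ) (iteratedDeriv k f) s := by
  induction k with
  | zero => simpa using hf
  | succ k ih =>
    rw [iteratedDeriv_succ]
    exact (ih (by omega)).deriv_of_isOpen hs (by norm_cast; omega)

lemma hasDerivAt_iteratedDeriv_of_contDiffOn {n k : ℕ} (hf : ContDiffOn ℝ n f s) (hs : IsOpen s)
    (hk : k < n) (hx : x ∈ s) : HasDerivAt (iteratedDeriv k f) (iteratedDeriv (k + 1) f x) x := by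
  rw [iteratedDeriv_succ]
  refine (((contDiffOn_iteratedDeriv_of_isOpen hf hs hk.le).differentiableOn ?_).differentiableAt
    (hs.mem_nhds hx)).hasDerivAt
  norm_cast; omega

lemma Set.EqOn.eqOn_of_hasDerivAt {u v u' v' : ℝ → ℝ} (h : EqOn u v s) (hs : IsOpen s)
    (hu : ∀ x ∈ s, HasDerivAt u (u' x) x) (hv : ∀ x ∈ s, HasDerivAt v (v' x) x) :
    EqOn u' v' s := fun x hx => by
  rw [← (hu x hx).deriv, ← (hv x hx).deriv]
  exact h.deriv hs hx

lemma eqOn_derivs_of_sq_eq_cube {Φ Φ' Φ'' Ψ Ψ' Ψ'' : ℝ → ℝ} (hs : IsOpen s)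
    (hΦ : ∀ x ∈ s, HasDerivAt Φ (Φ' x) x) (hΦ' : ∀ x ∈ s, HasDerivAt Φ' (Φ'' x) x)
    (hΨ : ∀ x ∈ s, HasDerivAt Ψ (Ψ' x) x) (hΨ' : ∀ x ∈ s, HasDerivAt Ψ' (Ψ'' x) x)
    (h : EqOn (fun x => Φ x ^ 2) (fun x => Ψ x ^ 3) s) :
    EqOn (fun x => 2 * Φ x * Φ' x) (fun x => 3 * Ψ x ^ 2 * Ψ' x) s ∧
      EqOn (fun x => 2 * Φ' x ^ 2 + 2 * Φ x * Φ'' x)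
        (fun x => 6 * Ψ x * Ψ' x ^ 2 + 3 * Ψ x ^ 2 * Ψ'' x) s := by
  have h₁ := h.eqOn_of_hasDerivAt (u' := fun x => 2 * Φ x * Φ' x)
    (v' := fun x => 3 * Ψ x ^ 2 * Ψ' x) hs
    (fun x hx => ((hΦ x hx).fun_pow 2).congr_deriv (by ring))
    (fun x hx => ((hΨ x hx).fun_pow 3).congr_deriv (by ring))
  refine ⟨h₁, h₁.eqOn_of_hasDerivAt hs
    (fun x hx => (((hΦ x hx).const_mul 2).mul (hΦ' x hx)).congr_deriv (by ring))
    (fun x hx => ((((hΨ x hx).fun_pow 2).const_mul 3).mul (hΨ' x hx)).congr_deriv (by ring))⟩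

end

section

variable {f g : ℝ → ℝ} {i j : ℕ} {x : ℝ}

lemma Wdet_self : Wdet f g i i x = 0 := sub_self _

lemma quadBilin_comm (a b c : ℝ) : quadBilin a b c f g i j x = quadBilin a b c f g j i x := by
  unfold quadBilin; ring

lemma quadBilin_one_one (a b c : ℝ) :
    quadBilin a b c f g 1 1 x =
      a * deriv f x ^ 2 + b * deriv f x * deriv g x + c * deriv g x ^ 2 := by
  simp only [quadBilin, iteratedDeriv_one]; ring

lemma hasDerivAt_Wdet (hfi : HasDerivAt (iteratedDeriv i f) (iteratedDeriv (i + 1) f x) x)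
    (hfj : HasDerivAt (iteratedDeriv j f) (iteratedDeriv (j + 1) f x) x)
    (hgi : HasDerivAt (iteratedDeriv i g) (iteratedDeriv (i + 1) g x) x)
    (hgj : HasDerivAt (iteratedDeriv j g) (iteratedDeriv (j + 1) g x) x) :
    HasDerivAt (Wdet f g i j) (Wdet f g (i + 1) j x + Wdet f g i (j + 1) x) x :=
  ((hfi.mul hgj).sub (hfj.mul hgi)).congr_deriv (by unfold Wdet; ring)

lemma hasDerivAt_quadBilin (a b c : ℝ)
    (hfi : HasDerivAt (iteratedDeriv i f) (iteratedDeriv (i + 1) f x) x)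
    (hfj : HasDerivAt (iteratedDeriv j f) (iteratedDeriv (j + 1) f x) x)
    (hgi : HasDerivAt (iteratedDeriv i g) (iteratedDeriv (i + 1) g x) x)
    (hgj : HasDerivAt (iteratedDeriv j g) (iteratedDeriv (j + 1) g x) x) :
    HasDerivAt (quadBilin a b c f g i j)
      (quadBilin a b c f g (i + 1) j x + quadBilin a b c f g i (j + 1) x) x :=
  ((((hfi.mul hfj).const_mul a).add (((hfi.mul hgj).add (hfj.mul hgi)).const_mul (b / 2))).add
    ((hgi.mul hgj).const_mul c)).congr_deriv (by unfold quadBilin; ring)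

end

lemma Wdet_two_one_ne_zero {f g : ℝ → ℝ} {x : ℝ}
    (hf : HasDerivAt (iteratedDeriv 1 f) (iteratedDeriv 2 f x) x)
    (hg : HasDerivAt (iteratedDeriv 1 g) (iteratedDeriv 2 g x) x) (hg' : deriv g x ≠ 0)
    (hphi' : deriv (fun t => deriv f t / deriv g t) x ≠ 0) : Wdet f g 2 1 x ≠ 0 := by
  rw [iteratedDeriv_one] at hf hg
  intro hW
  rw [Wdet, iteratedDeriv_one, iteratedDeriv_one] at hW
  rw [(hf.fun_div hg hg').deriv, hW, zero_div] at hphi'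
  exact hphi' rfl

lemma quad_relation_expression_eq {f g : ℝ → ℝ} {a b c x u : ℝ} (hW : Wdet f g 2 1 x ≠ 0)
    (hu₂ : u ^ 2 = quadBilin a b c f g 1 1 x) (hu₃ : u ^ 3 = Wdet f g 2 1 x)
    (E₂ : 2 * Wdet f g 2 1 x * Wdet f g 3 1 x =
      3 * quadBilin a b c f g 1 1 x ^ 2 * (2 * quadBilin a b c f g 1 2 x))
    (E₃ : 2 * Wdet f g 3 1 x ^ 2 + 2 * Wdet f g 2 1 x * (Wdet f g 4 1 x + Wdet f g 3 2 x) =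
      6 * quadBilin a b c f g 1 1 x * (2 * quadBilin a b c f g 1 2 x) ^ 2 +
        3 * quadBilin a b c f g 1 1 x ^ 2 *
          (2 * (quadBilin a b c f g 2 2 x + quadBilin a b c f g 1 3 x))) :
    (3 * Wdet f g 4 1 x + 12 * Wdet f g 3 2 x) / u ^ 5 - 5 * Wdet f g 3 1 x ^ 2 / u ^ 8 =
      -(9 / 4) * (b ^ 2 - 4 * a * c) := by
  have lagrange : quadBilin a b c f g 1 1 x * quadBilin a b c f g 2 2 x
      - quadBilin a b c f g 1 2 x ^ 2 + (b ^ 2 - 4 * a * c) / 4 * Wdet f g 2 1 x ^ 2 = 0 := by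
    unfold quadBilin Wdet; ring
  have cramer : Wdet f g 2 1 x * quadBilin a b c f g 1 3 x
      + Wdet f g 3 2 x * quadBilin a b c f g 1 1 x
      - Wdet f g 3 1 x * quadBilin a b c f g 1 2 x = 0 := by
    unfold quadBilin Wdet; ring
  have hu : u ≠ 0 := by rintro rfl; exact hW (by rw [← hu₃]; ring)
  rw [← hu₂, ← hu₃] at E₂ E₃ lagrange cramer
  generalize Wdet f g 3 1 x = W' at *
  generalize Wdet f g 4 1 x = r at *
  generalize Wdet f g 3 2 x = s at *
  generalize quadBilin a b c f g 1 2 x = p at *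
  generalize quadBilin a b c f g 2 2 x = q at *
  generalize quadBilin a b c f g 1 3 x = v at *
  have hW' : W' = 3 * u * p :=
    mul_left_cancel₀ (pow_ne_zero 3 hu) (by linear_combination (1 / 2) * E₂)
  rw [div_sub_div _ _ (pow_ne_zero 5 hu) (pow_ne_zero 8 hu), div_eq_iff (by positivity)]
  linear_combination u ^ 5 * ((3 / 2) * E₃ + 9 * u * cramer + 9 * u ^ 2 * lagrange
    + (-8 * W' - 15 * u * p) * hW')

theorem expression_constant_of_quad_relation_general
    (I : Set ℝ) (hI : IsOpen I)
    (f g : ℝ → ℝ)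
    (hf : ContDiffOn ℝ 4 f I) (hg : ContDiffOn ℝ 4 g I)
    (hg' : ∀ x ∈ I, deriv g x ≠ 0)
    (hphi' : ∀ x ∈ I, deriv (fun t => deriv f t / deriv g t) x ≠ 0)
    (a b c : ℝ)
    (hquad : ∀ x ∈ I,
      a * (deriv f x) ^ 2 + b * deriv f x * deriv g x + c * (deriv g x) ^ 2 =
        (cbrt (Wdet f g 2 1 x)) ^ 2) :
    ∀ x ∈ I,
      (3 * Wdet f g 4 1 x + 12 * Wdet f g 3 2 x) / (cbrt (Wdet f g 2 1 x)) ^ 5 -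
        5 * (Wdet f g 3 1 x) ^ 2 / (cbrt (Wdet f g 2 1 x)) ^ 8 =
      -(9 / 4) * (b ^ 2 - 4 * a * c) := by
  have hF {k} (hk : k < 4) {x} (hx : x ∈ I) :=
    hasDerivAt_iteratedDeriv_of_contDiffOn (n := 4) hf hI hk hx
  have hG {k} (hk : k < 4) {x} (hx : x ∈ I) :=
    hasDerivAt_iteratedDeriv_of_contDiffOn (n := 4) hg hI hk hx
  have hW {i j} (hi : i < 4) (hj : j < 4) {x} (hx : x ∈ I) :=
    hasDerivAt_Wdet (hF hi hx) (hF hj hx) (hG hi hx) (hG hj hx)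
  have hB {i j} (hi : i < 4) (hj : j < 4) {x} (hx : x ∈ I) :=
    hasDerivAt_quadBilin a b c (hF hi hx) (hF hj hx) (hG hi hx) (hG hj hx)
  have hsq : EqOn (fun x => Wdet f g 2 1 x ^ 2) (fun x => quadBilin a b c f g 1 1 x ^ 3) I :=
    fun x hx => by
      simp only [quadBilin_one_one, hquad x hx]
      nth_rewrite 1 [← cbrt_pow_three (Wdet f g 2 1 x)]
      ring
  obtain ⟨E₂, E₃⟩ := eqOn_derivs_of_sq_eq_cube hI
    (fun x hx => (hW (i := 2) (j := 1) (by norm_num) (by norm_num) hx).congr_deriv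
      (by rw [Wdet_self, add_zero]))
    (fun x hx => hW (i := 3) (j := 1) (by norm_num) (by norm_num) hx)
    (fun x hx => (hB (i := 1) (j := 1) (by norm_num) (by norm_num) hx).congr_deriv
      (by rw [quadBilin_comm a b c (i := 2)]; ring))
    (fun x hx => ((hB (i := 1) (j := 2) (by norm_num) (by norm_num) hx).const_mul 2)) hsq
  intro x hx
  exact quad_relation_expression_eq
    (Wdet_two_one_ne_zero (hF (by norm_num) hx) (hG (by norm_num) hx) (hg' x hx) (hphi' x hx))
    (by rw [quadBilin_one_one, hquad x hx]) (cbrt_pow_three _) (E₂ hx) (E₃ hx)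

/-- If a 𝒞₄ pair satisfies `a(f')² + bf'g' + c(g')² = (W^{2,1})^{2/3}`, then the
expression `(3W^{4,1} + 12W^{3,2})/(W^{2,1})^{5/3} − 5(W^{3,1})²/(W^{2,1})^{8/3}`
is constant on I, equal to `−(9/4)(b² − 4ac)`. -/
theorem expression_constant_of_quad_relation
    (I : Set ℝ) (hI : IsOpen I) (hIc : I.OrdConnected) (hne : I.Nonempty)
    (f g : ℝ → ℝ)
    (hf : ContDiffOn ℝ 4 f I) (hg : ContDiffOn ℝ 4 g I)
    (hg' : ∀ x ∈ I, deriv g x ≠ 0)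
    (hphi' : ∀ x ∈ I, deriv (fun t => deriv f t / deriv g t) x ≠ 0)
    (a b c : ℝ)
    (hquad : ∀ x ∈ I,
      a * (deriv f x) ^ 2 + b * deriv f x * deriv g x + c * (deriv g x) ^ 2 =
        (cbrt (Wdet f g 2 1 x)) ^ 2) :
    ∀ x ∈ I,
      (3 * Wdet f g 4 1 x + 12 * Wdet f g 3 2 x) / (cbrt (Wdet f g 2 1 x)) ^ 5 -
        5 * (Wdet f g 3 1 x) ^ 2 / (cbrt (Wdet f g 2 1 x)) ^ 8 =
      -(9 / 4) * (b ^ 2 - 4 * a * c) :=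
  expression_constant_of_quad_relation_general I hI f g hf hg hg' hphi' a b c hquad
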